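/- Let M be a finitely-valued random variable and Y_1,…,Y_ℓ random variables with values in a common finite set 𝒳, and let 𝔄⁰ be a collection of ζ-element subsets of {1,…,ℓ}. Assume that for every s = {s_1,…,s_ζ} ∈ 𝔄⁰ and every tuple (z_1,…,z_ζ) ∈ 𝒳^ζ occurring with positive probability, the entropy of M under the conditional probability measure given the event {Y_{s_1}=z_1,…,Y_{s_ζ}=z_ζ} equals H(M | (Y_{s_1},…,Y_{s_ζ})). Then for every general adaptive attack α compatible with 𝔄⁰, with observation vector Z, I(M ; Z) ≤ max_{s ∈ 𝔄⁰} I(M ; (Y_{s_1},…,Y_{s_ζ})). -/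

import Mathlib

open Finset

/-- Probability that the finitely-valued random variable `X` takes value `x`,
with respect to the probability mass function `p` on the finite sample space `Ω`. -/
noncomputable def pmfProb {Ω : Type*} [Fintype Ω] {α : Type*} [Fintype α] [DecidableEq α]
    (p : Ω → ℝ) (X : Ω → α) (x : α) : ℝ :=
  ∑ ω, if X ω = x then p ω else 0

/-- Shannon entropy (natural logarithm) of the random variable `X`. -/
noncomputable def entH {Ω : Type*} [Fintype Ω] {α : Type*} [Fintype α] [DecidableEq α]
    (p : Ω → ℝ) (X : Ω → α) : ℝ :=
  ∑ x, Real.negMulLog (pmfProb p X x)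

/-- Conditional Shannon entropy `H(X|Y) = H(X,Y) - H(Y)`. -/
noncomputable def condH {Ω : Type*} [Fintype Ω] {α β : Type*} [Fintype α] [DecidableEq α]
    [Fintype β] [DecidableEq β] (p : Ω → ℝ) (X : Ω → α) (Y : Ω → β) : ℝ :=
  entH p (fun ω => (X ω, Y ω)) - entH p Y

/-- Mutual information `I(X;Y) = H(X) + H(Y) - H(X,Y)`. -/
noncomputable def mutInfo {Ω : Type*} [Fintype Ω] {α β : Type*} [Fintype α] [DecidableEq α]
    [Fintype β] [DecidableEq β] (p : Ω → ℝ) (X : Ω → α) (Y : Ω → β) : ℝ :=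
  entH p X + entH p Y - entH p (fun ω => (X ω, Y ω))

/-- The conditional probability mass function given an event `E`. -/
noncomputable def condPMF {Ω : Type*} [Fintype Ω] (p : Ω → ℝ) (E : Ω → Prop)
    [DecidablePred E] : Ω → ℝ :=
  fun ω => if E ω then p ω / (∑ ω' ∈ Finset.univ.filter E, p ω') else 0

/-!
Whatever transcript `z` Eve observes, the positions she has queried form a set `s(z) ∈ 𝔄`
determined by `z`, and the event `{Z = z}` is exactly the event `{Y_{s(z)} = y}` for the
values `y` read off `z`. By hypothesis the entropy of `M` on that event is `H(M | Y_{s(z)})`,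
which is at least `min_{s ∈ 𝔄} H(M | Y_s)`. Averaging over `z` gives
`H(M | Z) ≥ min_{s ∈ 𝔄} H(M | Y_s)`, i.e. `I(M ; Z) ≤ max_{s ∈ 𝔄} I(M ; Y_s)`.
-/

open Real

section Entropy

variable {Ω α β : Type*} [Fintype Ω] [Fintype α] [DecidableEq α] [Fintype β] [DecidableEq β]
  {p : Ω → ℝ}

theorem pmfProb_nonneg (hp : ∀ ω, 0 ≤ p ω) (X : Ω → α) (x : α) : 0 ≤ pmfProb p X x :=
  sum_nonneg fun ω _ => ite_nonneg (hp ω) le_rfl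

theorem pmfProb_eq_sum_filter (X : Ω → α) (x : α) :
    pmfProb p X x = ∑ ω with X ω = x, p ω :=
  (sum_filter _ _).symm

theorem sum_pmfProb (X : Ω → α) : ∑ x, pmfProb p X x = ∑ ω, p ω := by
  simp only [pmfProb]
  rw [sum_comm]
  simp

theorem sum_pmfProb_prodMk_left (X : Ω → α) (Z : Ω → β) (z : β) :
    ∑ x, pmfProb p (fun ω => (X ω, Z ω)) (x, z) = pmfProb p Z z := by
  simp only [pmfProb]
  rw [sum_comm]
  refine sum_congr rfl fun ω _ => ?_
  by_cases h : Z ω = z <;> simp [h, Prod.ext_iff]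

theorem pmfProb_condPMF (X : Ω → α) (Z : Ω → β) (z : β) (x : α) :
    pmfProb (condPMF p fun ω => Z ω = z) X x
      = pmfProb p (fun ω => (X ω, Z ω)) (x, z) / pmfProb p Z z := by
  rw [pmfProb_eq_sum_filter Z z]
  simp only [pmfProb, condPMF, sum_div]
  refine sum_congr rfl fun ω _ => ?_
  by_cases hx : X ω = x <;> by_cases hz : Z ω = z <;> simp [hx, hz, Prod.ext_iff]

theorem mul_sum_negMulLog_div {ι : Type*} [Fintype ι] {P : ι → ℝ} (hP : ∀ i, 0 ≤ P i)
    {q : ℝ} (hq : ∑ i, P i = q) :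
    q * ∑ i, negMulLog (P i / q) = ∑ i, negMulLog (P i) - negMulLog q := by
  rcases (hq ▸ sum_nonneg fun i _ => hP i : 0 ≤ q).eq_or_lt with rfl | hq_pos
  · have hP0 : ∀ i, P i = 0 := fun i => (sum_eq_zero_iff_of_nonneg fun i _ => hP i).1 hq i
      (mem_univ i)
    simp [hP0]
  · have hsplit : ∀ i, negMulLog (P i) = P i / q * negMulLog q + q * negMulLog (P i / q) :=
      fun i => by rw [← negMulLog_mul, mul_div_cancel₀ _ hq_pos.ne']
    simp only [hsplit, sum_add_distrib, ← sum_mul, ← mul_sum, ← sum_div, hq,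
      div_self hq_pos.ne', one_mul]
    ring

theorem condH_eq_sum_pmfProb_mul_entH (hp : ∀ ω, 0 ≤ p ω) (X : Ω → α) (Z : Ω → β) :
    condH p X Z = ∑ z, pmfProb p Z z * entH (condPMF p fun ω => Z ω = z) X := by
  have hfiber : ∀ z, pmfProb p Z z * entH (condPMF p fun ω => Z ω = z) X
      = ∑ x, negMulLog (pmfProb p (fun ω => (X ω, Z ω)) (x, z))
        - negMulLog (pmfProb p Z z) := fun z => by
    simp only [entH, pmfProb_condPMF]
    exact mul_sum_negMulLog_div (fun x => pmfProb_nonneg hp _ _)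
      (sum_pmfProb_prodMk_left X Z z)
  rw [sum_congr rfl fun z _ => hfiber z, sum_sub_distrib, condH, entH, entH,
    Fintype.sum_prod_type, sum_comm]

theorem le_condH_of_forall_le_entH_condPMF (hp : ∀ ω, 0 ≤ p ω) (hp1 : ∑ ω, p ω = 1)
    (X : Ω → α) (Z : Ω → β) {c : ℝ}
    (hc : ∀ ω₀, 0 < pmfProb p Z (Z ω₀) → c ≤ entH (condPMF p fun ω => Z ω = Z ω₀) X) :
    c ≤ condH p X Z := by
  rw [condH_eq_sum_pmfProb_mul_entH hp, ← one_mul c, ← hp1, ← sum_pmfProb Z, sum_mul]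
  refine sum_le_sum fun z _ => ?_
  rcases (pmfProb_nonneg hp Z z).eq_or_lt with hz | hz
  · simp [← hz]
  obtain ⟨ω₀, rfl⟩ : ∃ ω₀, Z ω₀ = z := by
    by_contra! hne
    simp [pmfProb, hne] at hz
  exact mul_le_mul_of_nonneg_left (hc ω₀ hz) hz.le

theorem mutInfo_eq_entH_sub_condH (X : Ω → α) (Z : Ω → β) :
    mutInfo p X Z = entH p X - condH p X Z := by
  unfold mutInfo condH
  ring

theorem condPMF_congr {E E' : Ω → Prop} [DecidablePred E] [DecidablePred E']
    (h : ∀ ω, E ω ↔ E' ω) : condPMF p E = condPMF p E' := by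
  funext ω
  simp only [condPMF, filter_congr fun ω _ => h ω, h ω]

end Entropy

section AdaptiveAttack

variable {Ω 𝒳 : Type*} {ℓ ζ : ℕ} {Y : Fin ℓ → Ω → 𝒳}
  {α : (j : Fin ζ) → (Fin (j : ℕ) → 𝒳) → Fin ℓ} {Z : Ω → Fin ζ → 𝒳}

theorem adaptive_obs_eq_iff
    (hZ : ∀ ω (j : Fin ζ), Z ω j = Y (α j (fun i => Z ω ⟨i.1, i.2.trans j.2⟩)) ω)
    {ω : Ω} {z : Fin ζ → 𝒳} :
    Z ω = z ↔ ∀ j, Y (α j (fun i => z ⟨i.1, i.2.trans j.2⟩)) ω = z j := by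
  refine ⟨fun h j => by subst h; exact (hZ ω j).symm, fun h => funext fun j => ?_⟩
  induction j using WellFoundedLT.induction with
  | _ j ih =>
    have hprefix : (fun i : Fin j => Z ω ⟨i.1, i.2.trans j.2⟩)
        = fun i => z ⟨i.1, i.2.trans j.2⟩ := funext fun i => ih _ i.2
    rw [hZ ω j, hprefix, h j]

theorem adaptive_obs_eq_iff_forall_query_eq
    (hZ : ∀ ω (j : Fin ζ), Z ω j = Y (α j (fun i => Z ω ⟨i.1, i.2.trans j.2⟩)) ω)
    (ω₀ ω : Ω) :
    Z ω = Z ω₀ ↔ ∀ e : ↥(image (fun j : Fin ζ => α j (fun i => Z ω₀ ⟨i.1, i.2.trans j.2⟩))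
      univ), Y e.1 ω = Y e.1 ω₀ := by
  simp only [adaptive_obs_eq_iff hZ, Subtype.forall, forall_mem_image, mem_univ, true_imp_iff]
  exact forall_congr' fun j => by rw [← hZ ω₀ j]

end AdaptiveAttack

theorem adaptive_attack_leak_le_max_general {Ω μ 𝒳 : Type*} [Fintype Ω] [Fintype μ]
    [DecidableEq μ] [Fintype 𝒳] [DecidableEq 𝒳]
    (p : Ω → ℝ) (hp : ∀ ω, 0 ≤ p ω) (hp1 : ∑ ω, p ω = 1)
    (ℓ ζ : ℕ) (M : Ω → μ) (Y : Fin ℓ → Ω → 𝒳)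
    (𝔄 : Finset (Finset (Fin ℓ)))
    (hcond : ∀ s ∈ 𝔄, ∀ z : (↥s → 𝒳),
      0 < ∑ ω ∈ Finset.univ.filter (fun ω => ∀ e : ↥s, Y e.1 ω = z e), p ω →
      entH (condPMF p (fun ω => ∀ e : ↥s, Y e.1 ω = z e)) M
        = condH p M (fun ω (e : ↥s) => Y e.1 ω))
    (α : (j : Fin ζ) → (Fin (j : ℕ) → 𝒳) → Fin ℓ)
    (hcompat : ∀ z : Fin ζ → 𝒳,
      (Finset.image
        (fun j : Fin ζ => α j (fun i => z ⟨i.1, i.2.trans j.2⟩)) Finset.univ) ∈ 𝔄)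
    (Z : Ω → Fin ζ → 𝒳)
    (hZ : ∀ ω (j : Fin ζ),
      Z ω j = Y (α j (fun i => Z ω ⟨i.1, i.2.trans j.2⟩)) ω) :
    ∃ s ∈ 𝔄, mutInfo p M Z ≤ mutInfo p M (fun ω (e : ↥s) => Y e.1 ω) := by
  obtain ⟨ω₁, -, -⟩ := exists_ne_zero_of_sum_ne_zero (hp1 ▸ one_ne_zero : ∑ ω, p ω ≠ 0)
  obtain ⟨s₀, hs₀, hmin⟩ := exists_min_image 𝔄
    (fun s => condH p M (fun ω (e : ↥s) => Y e.1 ω)) ⟨_, hcompat (Z ω₁)⟩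
  refine ⟨s₀, hs₀, ?_⟩
  rw [mutInfo_eq_entH_sub_condH, mutInfo_eq_entH_sub_condH, sub_le_sub_iff_left]
  refine le_condH_of_forall_le_entH_condPMF hp hp1 M Z fun ω₀ hpos => ?_
  have hevent := adaptive_obs_eq_iff_forall_query_eq hZ ω₀
  rw [pmfProb_eq_sum_filter, filter_congr fun ω _ => hevent ω] at hpos
  rw [condPMF_congr hevent, hcond _ (hcompat _) _ hpos]
  exact hmin _ (hcompat _)

/-- paper's Theorem 1 / `T7B`: assume that for every `s ∈ 𝔄` and every
value tuple `z` of positive probability, the entropy of `M` under the conditional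
distribution given the event `{Y_s = z}` equals `H(M | Y_s)`. Then for every general
adaptive attack `α` compatible with `𝔄`, with observation vector `Z`,
`I(M ; Z) ≤ max_{s ∈ 𝔄} I(M ; Y_s)`. -/
theorem adaptive_attack_leak_le_max {Ω μ 𝒳 : Type*} [Fintype Ω] [Fintype μ]
    [DecidableEq μ] [Fintype 𝒳] [DecidableEq 𝒳]
    (p : Ω → ℝ) (hp : ∀ ω, 0 ≤ p ω) (hp1 : ∑ ω, p ω = 1)
    (ℓ ζ : ℕ) (M : Ω → μ) (Y : Fin ℓ → Ω → 𝒳)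
    (𝔄 : Finset (Finset (Fin ℓ))) (h𝔄 : ∀ s ∈ 𝔄, s.card = ζ)
    (hcond : ∀ s ∈ 𝔄, ∀ z : (↥s → 𝒳),
      0 < ∑ ω ∈ Finset.univ.filter (fun ω => ∀ e : ↥s, Y e.1 ω = z e), p ω →
      entH (condPMF p (fun ω => ∀ e : ↥s, Y e.1 ω = z e)) M
        = condH p M (fun ω (e : ↥s) => Y e.1 ω))
    (α : (j : Fin ζ) → (Fin (j : ℕ) → 𝒳) → Fin ℓ)
    (hcompat : ∀ z : Fin ζ → 𝒳,
      (Finset.image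
        (fun j : Fin ζ => α j (fun i => z ⟨i.1, i.2.trans j.2⟩)) Finset.univ) ∈ 𝔄)
    (Z : Ω → Fin ζ → 𝒳)
    (hZ : ∀ ω (j : Fin ζ),
      Z ω j = Y (α j (fun i => Z ω ⟨i.1, i.2.trans j.2⟩)) ω) :
    ∃ s ∈ 𝔄, mutInfo p M Z ≤ mutInfo p M (fun ω (e : ↥s) => Y e.1 ω) :=
  adaptive_attack_leak_le_max_general p hp hp1 ℓ ζ M Y 𝔄 hcond α hcompat Z hZ
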